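/- The probabilists' Hermite polynomials satisfy the product linearization formula: for all a, b ∈ ℕ, H_a(x)·H_b(x) = Σ_{r=0}^{min(a,b)} C(a,r)·C(b,r)·r!·H_{a+b−2r}(x). -/
import Mathlib

open Real

def hc (a b r : ℕ) : ℕ := a.choose r * b.choose r * r.factorial

lemma hc_eq_zero {a b r : ℕ} (h : min a b < r) : hc a b r = 0 := by
  rcases min_lt_iff.mp h with h | h <;>
    simp [hc, Nat.choose_eq_zero_of_lt h]

lemma hc_key (n b s : ℕ) :
    hc (n+2) b (s+1) + (n+1) * hc n b s
      = hc (n+1) b (s+1) + hc (n+1) b s * (n+1+b - 2*s) := by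
  by_cases hb : b < s
  · have h1 : b.choose s = 0 := Nat.choose_eq_zero_of_lt hb
    have h2 : b.choose (s+1) = 0 := Nat.choose_eq_zero_of_lt (by omega)
    simp [hc, h1, h2]
  by_cases hn : n + 1 < s
  · have h1 : (n+2).choose (s+1) = 0 := Nat.choose_eq_zero_of_lt (by omega)
    have h2 : n.choose s = 0 := Nat.choose_eq_zero_of_lt (by omega)
    have h3 : (n+1).choose (s+1) = 0 := Nat.choose_eq_zero_of_lt (by omega)
    have h4 : (n+1).choose s = 0 := Nat.choose_eq_zero_of_lt (by omega)
    simp [hc, h1, h2, h3, h4]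
  push_neg at hb hn
  have P : (n+2).choose (s+1) = (n+1).choose s + (n+1).choose (s+1) :=
    Nat.choose_succ_succ (n+1) s
  have X1 : b.choose (s+1) * (s+1) = b.choose s * (b - s) :=
    Nat.choose_succ_right_eq b s
  have X2 : n.choose s * (n+1) = (n+1).choose s * (n+1-s) :=
    Nat.choose_mul_succ_eq n s
  have harith : (b - s) + (n + 1 - s) = n+1+b-2*s := by omega
  simp only [hc, P, Nat.factorial_succ]
  zify [hb, hn, show 2*s ≤ n+1+b by omega] at X1 X2 harith ⊢
  linear_combination (((s.factorial : ℤ)) * (n+1).choose s) * X1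
    + ((b.choose s : ℤ) * (s.factorial : ℤ)) * X2
    + ((n+1).choose s * (b.choose s:ℤ) * (s.factorial : ℤ)) * harith

lemma hc_key_real (n b s : ℕ) :
    (hc (n+2) b (s+1) : ℝ)
      = hc (n+1) b (s+1) + (hc (n+1) b s : ℝ) * ((n+1+b - 2*s : ℕ) : ℝ)
        - ((n:ℝ)+1) * hc n b s := by
  have h := hc_key n b s
  have h' : (hc (n+2) b (s+1) : ℝ) + ((n:ℝ)+1) * hc n b s
      = (hc (n+1) b (s+1) : ℝ) + (hc (n+1) b s : ℝ) * ((n+1+b - 2*s : ℕ) : ℝ) := by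
    exact_mod_cast congrArg (Nat.cast (R := ℝ)) h
  linarith

/-- Product linearization formula for the probabilists' Hermite polynomials:
`H_a(x)·H_b(x) = Σ_{r=0}^{min(a,b)} C(a,r)·C(b,r)·r!·H_{a+b−2r}(x)`. -/
theorem hermite_product_linearization
    (H : ℕ → ℝ → ℝ)
    (hH0 : ∀ x : ℝ, H 0 x = 1)
    (hH1 : ∀ x : ℝ, H 1 x = x)
    (hrec : ∀ n : ℕ, 1 ≤ n → ∀ x : ℝ,
      H (n + 1) x = x * H n x - (n : ℝ) * H (n - 1) x) :
    ∀ (a b : ℕ) (x : ℝ),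
      H a x * H b x
        = ∑ r ∈ Finset.range (min a b + 1),
            ((Nat.choose a r * Nat.choose b r * Nat.factorial r : ℕ) : ℝ)
              * H (a + b - 2 * r) x := by
  have xmul : ∀ (n : ℕ) (x : ℝ), x * H n x = H (n+1) x + (n : ℝ) * H (n-1) x := by
    intro n x
    match n with
    | 0 => simp [hH0, hH1]
    | (m+1) =>
      have h := hrec (m+1) (by omega) x
      simp only [Nat.add_sub_cancel] at h ⊢
      push_cast at h ⊢
      linarith
  have ext : ∀ (a b : ℕ) (x : ℝ) (N M : ℕ), min a b < N → min a b < M →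
      ∑ r ∈ Finset.range N, (hc a b r : ℝ) * H (a+b-2*r) x
        = ∑ r ∈ Finset.range M, (hc a b r : ℝ) * H (a+b-2*r) x := by
    have canon : ∀ (a b : ℕ) (x : ℝ) (N : ℕ), min a b < N →
        ∑ r ∈ Finset.range N, (hc a b r : ℝ) * H (a+b-2*r) x
          = ∑ r ∈ Finset.range (min a b + 1), (hc a b r : ℝ) * H (a+b-2*r) x := by
      intro a b x N hN
      refine (Finset.sum_subset ?_ ?_).symm
      · intro r hr
        simp only [Finset.mem_range] at hr ⊢
        omega
      · intro r _ hr2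
        simp only [Finset.mem_range, not_lt] at hr2
        rw [hc_eq_zero (by omega : min a b < r)]
        simp
    intro a b x N M hN hM
    rw [canon a b x N hN, canon a b x M hM]
  have main : ∀ a : ℕ,
      (∀ (b : ℕ) (x : ℝ) (N : ℕ), min a b < N →
        H a x * H b x = ∑ r ∈ Finset.range N, (hc a b r : ℝ) * H (a+b-2*r) x)
      ∧ (∀ (b : ℕ) (x : ℝ) (N : ℕ), min (a+1) b < N →
        H (a+1) x * H b x = ∑ r ∈ Finset.range N, (hc (a+1) b r : ℝ) * H (a+1+b-2*r) x) := by
    intro a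
    induction a with
    | zero =>
      constructor
      · intro b x N hN
        rw [ext 0 b x N 1 hN (by simp)]
        simp [hc, hH0]
      · intro b x N hN
        rcases Nat.eq_zero_or_pos b with hb | hb
        · subst hb
          rw [ext 1 0 x N 1 hN (by simp)]
          simp [hc, hH0, hH1]
        · rw [ext 1 b x N 2 hN (by omega)]
          have hx := xmul b x
          rw [hH1]
          rw [Finset.sum_range_succ, Finset.sum_range_one]
          have i1 : 1 + b - 2*0 = b + 1 := by omega
          have i2 : 1 + b - 2*1 = b - 1 := by omega
          rw [i1, i2]
          have c0 : hc 1 b 0 = 1 := by simp [hc]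
          have c1 : hc 1 b 1 = b := by simp [hc, Nat.choose_one_right]
          rw [c0, c1, hx]
          push_cast
          ring
    | succ n ih =>
      refine ⟨ih.2, ?_⟩
      intro b x N hN
      have e2 : n + 1 + 1 = n + 2 := by omega
      obtain ⟨M, hM⟩ : ∃ M, M = n + b + 3 := ⟨_, rfl⟩
      have e1 := ih.2 b x M (by omega)
      have e0 := ih.1 b x M (by omega)
      have h2 : H (n+1+1) x = x * H (n+1) x - ((n:ℝ)+1) * H n x := by
        have h := hrec (n+1) (by omega) x
        simp only [Nat.add_sub_cancel] at h
        push_cast at h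
        exact h
      rw [ext (n+1+1) b x N (M+1) hN (by omega)]
      -- expand the product using the recurrence and both IHs
      have expand : H (n+1+1) x * H b x
          = (∑ r ∈ Finset.range M, (hc (n+1) b r : ℝ) * H (n+2+b-2*r) x)
            + ((∑ r ∈ Finset.range M,
                (hc (n+1) b r : ℝ) * ((n+1+b-2*r : ℕ) : ℝ) * H (n+b-2*r) x)
            - ∑ r ∈ Finset.range M, ((n:ℝ)+1) * (hc n b r : ℝ) * H (n+b-2*r) x) := by
        have step1 : H (n+1+1) x * H b x
            = x * (H (n+1) x * H b x) - ((n:ℝ)+1) * (H n x * H b x) := by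
          rw [h2]; ring
        rw [step1, e1, e0, Finset.mul_sum, Finset.mul_sum,
          ← Finset.sum_sub_distrib, ← Finset.sum_sub_distrib, ← Finset.sum_add_distrib]
        apply Finset.sum_congr rfl
        intro r _
        by_cases hrm : min (n+1) b < r
        · rw [hc_eq_zero hrm]
          push_cast
          ring
        · push_neg at hrm
          have hr1 : r ≤ n+1 := le_trans hrm (min_le_left _ _)
          have hr2 : r ≤ b := le_trans hrm (min_le_right _ _)
          have i1 : (n+1+b-2*r) + 1 = n+2+b-2*r := by omega
          have i2 : (n+1+b-2*r) - 1 = n+b-2*r := by omega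
          have hxr := xmul (n+1+b-2*r) x
          rw [i1, i2] at hxr
          calc x * ((hc (n+1) b r : ℝ) * H (n+1+b-2*r) x)
                - ((n:ℝ)+1) * ((hc n b r : ℝ) * H (n+b-2*r) x)
              = (hc (n+1) b r : ℝ) * (x * H (n+1+b-2*r) x)
                - ((n:ℝ)+1) * (hc n b r : ℝ) * H (n+b-2*r) x := by ring
            _ = _ := by rw [hxr]; ring
      rw [expand]
      -- extend the first sum from range M to range (M+1)
      have hA : (∑ r ∈ Finset.range M, (hc (n+1) b r : ℝ) * H (n+2+b-2*r) x)
          = ∑ r ∈ Finset.range (M+1), (hc (n+1) b r : ℝ) * H (n+2+b-2*r) x := by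
        rw [Finset.sum_range_succ, hc_eq_zero (show min (n+1) b < M by omega)]
        push_cast
        ring
      rw [hA]
      rw [Finset.sum_range_succ' (fun r => (hc (n+1) b r : ℝ) * H (n+2+b-2*r) x) M]
      rw [Finset.sum_range_succ' (fun r => (hc (n+1+1) b r : ℝ) * H (n+1+1+b-2*r) x) M]
      have h00 : (hc (n+1) b 0 : ℝ) * H (n+2+b-2*0) x
          = (hc (n+1+1) b 0 : ℝ) * H (n+1+1+b-2*0) x := by
        have ia : n+2+b-2*0 = n+1+1+b-2*0 := by omega
        have ib : hc (n+1) b 0 = hc (n+1+1) b 0 := by simp [hc]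
        rw [ia, ib]
      have hsum : (∑ r ∈ Finset.range M, (hc (n+1) b (r+1) : ℝ) * H (n+2+b-2*(r+1)) x)
            + ((∑ r ∈ Finset.range M,
                (hc (n+1) b r : ℝ) * ((n+1+b-2*r : ℕ) : ℝ) * H (n+b-2*r) x)
            - ∑ r ∈ Finset.range M, ((n:ℝ)+1) * (hc n b r : ℝ) * H (n+b-2*r) x)
          = ∑ r ∈ Finset.range M, (hc (n+1+1) b (r+1) : ℝ) * H (n+1+1+b-2*(r+1)) x := by
        rw [← Finset.sum_sub_distrib, ← Finset.sum_add_distrib]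
        apply Finset.sum_congr rfl
        intro r _
        have i1 : n+b-2*r = n+2+b-2*(r+1) := by omega
        have i2 : n+1+1+b-2*(r+1) = n+2+b-2*(r+1) := by omega
        rw [i1, i2, e2]
        have hk := hc_key_real n b r
        linear_combination (-(H (n+2+b-2*(r+1)) x)) * hk
      linarith [hsum, h00]
  intro a b x
  have h := (main a).1 b x (min a b + 1) (by omega)
  rw [h]
  simp only [hc]
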